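/- arXiv:2306.03023 — 5 statements merged into one kernel-verified Lean document; each statement's English description precedes it below -/
import Mathlib

section
/- Let C be an abelian category, C₀ ⊆ C a full abelian subcategory closed under isomorphisms, subquotients computed in C₀, and extensions, such that every object of C₀ is Noetherian (in C₀). Suppose further that every nonzero object X of C admits a nonzero map X' → X with X' ∈ C₀ (C₀ weakly generates C). Then C₀ is closed under subobjects in C: if X ↪ Y is a monomorphism in C and Y ∈ C₀, then X ∈ C₀. -/
/-!
STATEMENT 3: Let `C` be an abelian category and `P` the class of objects of a full
abelian subcategory `C₀` closed under isomorphisms, subquotients (images, kernels and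
cokernels of maps between objects of `C₀`, computed in `C`) and extensions, such that
every object of `C₀` is Noetherian (ACC on subobjects lying in `C₀`).  If every
nonzero object `X` of `C` admits a nonzero map `X' ⟶ X` with `X' ∈ C₀` (weak
generation), then `C₀` is closed under subobjects in `C`.
-/

open CategoryTheory CategoryTheory.Limits

universe v u

variable {C : Type u} [Category.{v} C] [Abelian C]

theorem closed_under_subobjects_of_noetherian_weakly_generating
    (P : C → Prop)
    -- closed under isomorphisms
    (hiso : ∀ {X Y : C}, (X ≅ Y) → P X → P Y)
    -- closed under subquotients computed from morphisms of `C₀`: images, kernels, cokernels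
    (himg : ∀ {X Y : C} (f : X ⟶ Y), P X → P Y → P (Limits.image f))
    (hker : ∀ {X Y : C} (f : X ⟶ Y), P X → P Y → P (kernel f))
    (hcoker : ∀ {X Y : C} (f : X ⟶ Y), P X → P Y → P (cokernel f))
    -- closed under extensions
    (hext : ∀ (S : ShortComplex C), S.ShortExact → P S.X₁ → P S.X₃ → P S.X₂)
    -- every object of `C₀` is Noetherian in `C₀`: ACC on chains of subobjects in `C₀`
    (hnoeth : ∀ (Y : C), P Y →
      ∀ (A : ℕ → C) (g : ∀ n, A n ⟶ A (n + 1)) (u : ∀ n, A n ⟶ Y),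
        (∀ n, P (A n)) → (∀ n, Mono (g n)) → (∀ n, Mono (u n)) →
        (∀ n, g n ≫ u (n + 1) = u n) →
        ∃ N : ℕ, ∀ n, N ≤ n → IsIso (g n))
    -- `C₀` weakly generates `C`
    (hgen : ∀ X : C, ¬ IsZero X → ∃ (X' : C) (f : X' ⟶ X), P X' ∧ f ≠ 0) :
    -- conclusion: `C₀` is closed under subobjects in `C`
    ∀ (X Y : C) (i : X ⟶ Y), Mono i → P Y → P X := by
  intro X Y i hi hY
  by_contra hX
  -- key extension step
  have key : ∀ (A : C) (u : A ⟶ X), Mono u → P A →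
      ∃ (A' : C) (u' : A' ⟶ X) (g : A ⟶ A'),
        Mono u' ∧ P A' ∧ Mono g ∧ g ≫ u' = u ∧ ¬ IsIso g := by
    intro A u hu hA
    haveI := hu
    have hne : ¬ IsZero (cokernel u) := by
      intro hz
      haveI : Epi u := Preadditive.epi_of_isZero_cokernel u hz
      haveI : IsIso u := isIso_of_mono_of_epi u
      exact hX (hiso (asIso u) hA)
    obtain ⟨X', f, hX', hf⟩ := hgen _ hne
    set fst := pullback.fst (cokernel.π u) f with hfst_def
    set snd := pullback.snd (cokernel.π u) f with hsnd_def
    have hsq : fst ≫ cokernel.π u = snd ≫ f := pullback.condition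
    have hu0 : u ≫ cokernel.π u = 0 := cokernel.condition u
    let ℓ : A ⟶ pullback (cokernel.π u) f := pullback.lift u 0 (by simp [hu0])
    have hℓfst : ℓ ≫ fst = u := pullback.lift_fst _ _ _
    have hℓsnd : ℓ ≫ snd = 0 := pullback.lift_snd _ _ _
    haveI hℓmono : Mono ℓ := mono_of_mono_fac hℓfst
    -- ℓ is a kernel of snd
    have hker_lim : IsLimit (KernelFork.ofι ℓ hℓsnd) := by
      refine KernelFork.IsLimit.ofι' ℓ hℓsnd (fun {T} t ht => ?_)
      have h1 : (t ≫ fst) ≫ cokernel.π u = 0 := by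
        rw [Category.assoc, hsq, ← Category.assoc, ht, zero_comp]
      refine ⟨Abelian.monoLift u (t ≫ fst) h1, ?_⟩
      apply pullback.hom_ext
      · rw [← hfst_def]; simp [hℓfst, Abelian.monoLift_comp]
      · rw [← hsnd_def]; simp [hℓsnd, ht]
    haveI : Epi snd := by rw [hsnd_def]; infer_instance
    have hSE : (ShortComplex.mk ℓ snd hℓsnd).ShortExact :=
      ⟨(ShortComplex.mk ℓ snd hℓsnd).exact_of_f_is_kernel hker_lim⟩
    have hB : P (pullback (cokernel.π u) f) := hext _ hSE hA hX'
    -- new subobject of X: image of fst ≫ i, which embeds in X via image.lift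
    let F : MonoFactorisation (fst ≫ i) := ⟨X, i, fst, rfl⟩
    let u' : Limits.image (fst ≫ i) ⟶ X := Limits.image.lift F
    have hu'i : u' ≫ i = Limits.image.ι (fst ≫ i) := Limits.image.lift_fac F
    let g : A ⟶ Limits.image (fst ≫ i) := ℓ ≫ factorThruImage (fst ≫ i)
    have hgu' : g ≫ u' = u := by
      rw [← cancel_mono i]
      simp only [g, Category.assoc, hu'i, Limits.image.fac]
      rw [← Category.assoc, hℓfst]
    refine ⟨_, u', g, mono_of_mono_fac hu'i, himg _ hB hY,
      mono_of_mono_fac hgu', hgu', ?_⟩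
    intro hgiso
    have h1 : fst = factorThruImage (fst ≫ i) ≫ u' := by
      rw [← cancel_mono i, Category.assoc, hu'i, Limits.image.fac]
    have h2 : u' ≫ cokernel.π u = 0 := by
      rw [← cancel_epi g, ← Category.assoc, hgu', hu0, comp_zero]
    have hπ : fst ≫ cokernel.π u = 0 := by
      rw [h1, Category.assoc, h2, comp_zero]
    have hsf : snd ≫ f = 0 := by rw [← hsq, hπ]
    exact hf ((cancel_epi snd).1 (by rw [hsf, comp_zero]))
  choose A' u' g hu' hP' hg hfac hniso using key
  -- base: zero subobject
  have hz0 : IsZero (kernel (𝟙 Y)) := by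
    rw [IsZero.iff_id_eq_zero]
    have h : kernel.ι (𝟙 Y) = 0 := by simpa using kernel.condition (𝟙 Y)
    rw [← cancel_mono (kernel.ι (𝟙 Y))]
    simp [h]
  have mono0 : Mono (0 : kernel (𝟙 Y) ⟶ X) := ⟨fun _ _ _ => hz0.eq_of_tgt _ _⟩
  let Step := (A : C) ×' (u : A ⟶ X) ×' (Mono u ∧ P A)
  let next : Step → Step := fun s =>
    ⟨A' s.1 s.2.1 s.2.2.1 s.2.2.2, u' s.1 s.2.1 s.2.2.1 s.2.2.2,
      hu' s.1 s.2.1 s.2.2.1 s.2.2.2, hP' s.1 s.2.1 s.2.2.1 s.2.2.2⟩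
  let s0 : Step := ⟨kernel (𝟙 Y), 0, mono0, hker (𝟙 Y) hY hY⟩
  let T : ℕ → Step := fun n => Nat.rec s0 (fun _ s => next s) n
  obtain ⟨N, hN⟩ := hnoeth Y hY (fun n => (T n).1)
    (fun n => g (T n).1 (T n).2.1 (T n).2.2.1 (T n).2.2.2)
    (fun n => (T n).2.1 ≫ i)
    (fun n => (T n).2.2.2)
    (fun n => hg (T n).1 (T n).2.1 (T n).2.2.1 (T n).2.2.2)
    (fun n => by haveI := (T n).2.2.1; exact mono_comp _ _)
    (fun n => by
      have h := hfac (T n).1 (T n).2.1 (T n).2.2.1 (T n).2.2.2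
      rw [← Category.assoc]
      exact congrArg (fun t => t ≫ i) h)
  exact hniso (T N).1 (T N).2.1 (T N).2.2.1 (T N).2.2.2 (hN N le_rfl)
end

section
/- In a monoidal category, if every object has left and right duals (the category is rigid) and (−)* is a monoidal anti-involution (i.e., (F ⊗ G)* ≅ G* ⊗ F* naturally, with (−)** ≅ id), and D is an operation with F^R ≅ D(F)* for all F, then D(F ⊗ G) ≅ D(F) ⊗ D(G) naturally in F and G. -/
/-!
STATEMENT 6: In a rigid monoidal category equipped with a monoidal anti-involution
`(−)*` (so `(F ⊗ G)* ≅ G* ⊗ F*` and `(−)** ≅ id`) and an operation `D` on objects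
with `F^R ≅ D(F)*` for all `F` (where `F^R` denotes a right dual of `F`), one has
`D(F ⊗ G) ≅ D(F) ⊗ D(G)` for all `F, G`.

Dual conventions follow the paper: `Y` is a right dual of `F` iff `ExactPairing Y F`
(`u : 𝟙 ⟶ Y ⊗ F`, `c : F ⊗ Y ⟶ 𝟙`), and a left dual of `F` iff `ExactPairing F Y`.
-/

open CategoryTheory CategoryTheory.MonoidalCategory

universe v u

variable {C : Type u} [Category.{v} C] [MonoidalCategory C]

/-- `X ⊗ X'` and `Y' ⊗ Y` form an exact pairing. -/
def tensorExactPairing (X X' Y Y' : C) [ExactPairing X Y] [ExactPairing X' Y'] :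
    ExactPairing (X ⊗ X') (Y' ⊗ Y) where
  coevaluation' := η_ X Y ⊗≫ X ◁ η_ X' Y' ▷ Y ⊗≫ 𝟙 ((X ⊗ X') ⊗ (Y' ⊗ Y))
  evaluation' := 𝟙 ((Y' ⊗ Y) ⊗ (X ⊗ X')) ⊗≫ Y' ◁ ε_ X Y ▷ X' ⊗≫ ε_ X' Y'
  coevaluation_evaluation' := by
    calc (Y' ⊗ Y) ◁ (η_ X Y ⊗≫ X ◁ η_ X' Y' ▷ Y ⊗≫ 𝟙 ((X ⊗ X') ⊗ (Y' ⊗ Y))) ≫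
          (α_ _ _ _).inv ≫
          (𝟙 ((Y' ⊗ Y) ⊗ (X ⊗ X')) ⊗≫ Y' ◁ ε_ X Y ▷ X' ⊗≫ ε_ X' Y') ▷ (Y' ⊗ Y)
        = 𝟙 _ ⊗≫ Y' ◁ Y ◁ η_ X Y ⊗≫
            ((Y' ⊗ (Y ⊗ X)) ◁ (η_ X' Y' ▷ Y) ≫ (Y' ◁ ε_ X Y) ▷ ((X' ⊗ Y') ⊗ Y)) ⊗≫
            ε_ X' Y' ▷ (Y' ⊗ Y) ⊗≫ 𝟙 _ := by
          monoidal
      _ = 𝟙 _ ⊗≫ Y' ◁ (Y ◁ η_ X Y ⊗≫ ε_ X Y ▷ Y) ⊗≫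
            (Y' ◁ η_ X' Y' ⊗≫ ε_ X' Y' ▷ Y') ▷ Y ⊗≫ 𝟙 _ := by
          rw [whisker_exchange]; monoidal
      _ = (ρ_ (Y' ⊗ Y)).hom ≫ (λ_ (Y' ⊗ Y)).inv := by
          rw [ExactPairing.coevaluation_evaluation'',
            ExactPairing.coevaluation_evaluation'']; monoidal
  evaluation_coevaluation' := by
    calc (η_ X Y ⊗≫ X ◁ η_ X' Y' ▷ Y ⊗≫ 𝟙 ((X ⊗ X') ⊗ (Y' ⊗ Y))) ▷ (X ⊗ X') ≫
          (α_ _ _ _).hom ≫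
          (X ⊗ X') ◁ (𝟙 ((Y' ⊗ Y) ⊗ (X ⊗ X')) ⊗≫ Y' ◁ ε_ X Y ▷ X' ⊗≫ ε_ X' Y')
        = 𝟙 _ ⊗≫ η_ X Y ▷ (X ⊗ X') ⊗≫
            X ◁ (η_ X' Y' ▷ ((Y ⊗ X) ⊗ X') ≫ (X' ⊗ Y') ◁ (ε_ X Y ▷ X')) ⊗≫
            (X ⊗ X') ◁ ε_ X' Y' ⊗≫ 𝟙 _ := by
          monoidal
      _ = 𝟙 _ ⊗≫ (η_ X Y ▷ X ⊗≫ X ◁ ε_ X Y) ▷ X' ⊗≫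
            X ◁ (η_ X' Y' ▷ X' ⊗≫ X' ◁ ε_ X' Y') ⊗≫ 𝟙 _ := by
          rw [← whisker_exchange]; monoidal
      _ = (λ_ (X ⊗ X')).hom ≫ (ρ_ (X ⊗ X')).inv := by
          rw [ExactPairing.evaluation_coevaluation'',
            ExactPairing.evaluation_coevaluation'']; monoidal

theorem D_monoidal_of_dual_eq_star
    -- rigidity: every object has a right dual and a left dual
    (hrigid : ∀ X : C, (∃ Y : C, Nonempty (ExactPairing Y X)) ∧
      (∃ Y : C, Nonempty (ExactPairing X Y)))
    -- the anti-involution `(−)*`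
    (star : C ⥤ C)
    (anti : ∀ F G : C, star.obj (F ⊗ G) ≅ star.obj G ⊗ star.obj F)
    (invol : star ⋙ star ≅ 𝟭 C)
    -- the operation `D`, with `F^R ≅ D(F)*`: `D(F)*` is a right dual of `F`
    (D : C → C)
    (hD : ∀ F : C, Nonempty (ExactPairing (star.obj (D F)) F)) :
    ∀ F G : C, Nonempty (D (F ⊗ G) ≅ D F ⊗ D G) := by
  intro F G
  obtain ⟨eF⟩ := hD F
  obtain ⟨eG⟩ := hD G
  obtain ⟨eFG⟩ := hD (F ⊗ G)
  haveI := eF; haveI := eG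
  have pt : ExactPairing (star.obj (D G) ⊗ star.obj (D F)) (F ⊗ G) :=
    tensorExactPairing (star.obj (D G)) (star.obj (D F)) G F
  have i1 : star.obj (D (F ⊗ G)) ≅ star.obj (D G) ⊗ star.obj (D F) :=
    leftDualIso eFG pt
  have i2 : star.obj (D (F ⊗ G)) ≅ star.obj (D F ⊗ D G) :=
    i1 ≪≫ (anti (D F) (D G)).symm
  exact ⟨(invol.app (D (F ⊗ G))).symm ≪≫ star.mapIso i2 ≪≫ invol.app (D F ⊗ D G)⟩
end

section
/- Let Φ : C ⇄ D : Φ^R be an adjunction between presentable stable ∞-categories. Suppose (D^{≤0}, D^{≥0}) is a t-structure on D with D^{≤0} presentable, and suppose the composite Φ Φ^R : D → D is left t-exact (preserves D^{≥1}). Then setting C^{≤0} := Φ^{-1}(D^{≤0}) defines a t-structure on C for which Φ is t-exact. -/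
/-!
STATEMENT 8: Let `Φ : C ⇄ D : R` be an adjunction between presentable stable
∞-categories (modelled as pretriangulated categories with all small colimits).
Suppose `(D^{≤0}, D^{≥0})` is a t-structure on `D` with `D^{≤0}` presentable
(modelled: `D^{≤0}` is closed under small colimits), and that `Φ ∘ R` is left
t-exact.  Then `C^{≤0} := Φ⁻¹(D^{≤0})` defines a t-structure on `C` for which
`Φ` is t-exact.
-/

open CategoryTheory CategoryTheory.Limits CategoryTheory.Pretriangulated

universe v u₁ u₂

namespace TLiftAux

open CategoryTheory.Triangulated

section CSide

variable {C : Type u₁} [Category.{v} C] [Preadditive C] [HasZeroObject C] [HasShift C ℤ]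
  [∀ n : ℤ, (shiftFunctor C n).Additive] [Pretriangulated C]

/-- Splitting of idempotents using a coequalizer. -/
lemma splitIdempotent [HasCoequalizers C] {Y : C} (e : Y ⟶ Y) (he : e ≫ e = e) :
    ∃ (I : C) (p : Y ⟶ I) (i : I ⟶ Y), i ≫ p = 𝟙 I ∧ p ≫ i = e := by
  let π : Y ⟶ coequalizer (𝟙 Y) e := coequalizer.π _ _
  have hπ : e ≫ π = π := by
    conv_rhs => rw [← Category.id_comp π]
    exact (coequalizer.condition (𝟙 Y) e).symm
  let ι : coequalizer (𝟙 Y) e ⟶ Y := coequalizer.desc e (by rw [Category.id_comp, he])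
  have hπι : π ≫ ι = e := coequalizer.π_desc _ _
  refine ⟨_, π, ι, ?_, hπι⟩
  have : π ≫ ι ≫ π = π ≫ 𝟙 _ := by
    rw [← Category.assoc, hπι, hπ, Category.comp_id]
  exact (cancel_epi π).1 this

/-- In a pretriangulated category, every epimorphism splits. -/
lemma sectionOfEpi {X Y : C} (f : X ⟶ Y) (hf : Epi f) : ∃ s : Y ⟶ X, s ≫ f = 𝟙 Y := by
  obtain ⟨Z, g, h, hT⟩ := Pretriangulated.distinguished_cocone_triangle f
  have hg : g = 0 := Triangle.mor₂_eq_zero_of_epi₁ _ hT hf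
  obtain ⟨s, hs⟩ := Triangle.coyoneda_exact₂ _ hT (𝟙 Y) (by exact (Category.id_comp _).trans hg)
  exact ⟨s, hs.symm⟩

end CSide

section DSide

variable {D : Type u₂} [Category.{v} D] [Preadditive D] [HasZeroObject D] [HasShift D ℤ]
  [∀ n : ℤ, (shiftFunctor D n).Additive] [Pretriangulated D]

lemma zero₀ (tD : Triangulated.TStructure D) {P Q : D} (f : P ⟶ Q) {a b : ℤ}
    (hP : tD.le a P) (hQ : tD.ge b Q) (hab : a < b) : f = 0 := by
  have hP' : tD.le 0 (P⟦a⟧) := tD.le_shift a a 0 (by omega) P hP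
  have hQ' : tD.ge (b - a) (Q⟦a⟧) := tD.ge_shift b a (b - a) (by omega) Q hQ
  have hQ'' : tD.ge 1 (Q⟦a⟧) := tD.ge_antitone (by omega : (1:ℤ) ≤ b - a) _ hQ'
  have hz : (shiftFunctor D a).map f = 0 := tD.zero' _ hP' hQ''
  exact (shiftFunctor D a).map_eq_zero_iff.1 hz

lemma le_of_retract (tD : Triangulated.TStructure D) (n : ℤ) {X L : D} (hL : tD.le n L)
    (i : X ⟶ L) (r : L ⟶ X) (hir : i ≫ r = 𝟙 X) : tD.le n X := by
  obtain ⟨LX, MX, hLX, hMX, lx, mx, δ, hT⟩ := tD.exists_triangle X n (n + 1) rfl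
  have hmx : mx = 0 := by
    have h1 : r ≫ mx = 0 := zero₀ tD _ hL hMX (by omega)
    calc mx = i ≫ r ≫ mx := by rw [← Category.assoc, hir, Category.id_comp]
    _ = 0 := by rw [h1, comp_zero]
  obtain ⟨s, hs⟩ : ∃ s : X ⟶ LX, 𝟙 X = s ≫ lx := Triangle.coyoneda_exact₂ _ hT (𝟙 X) (by exact (Category.id_comp _).trans hmx)
  -- hs : 𝟙 X = s ≫ lx
  have hz : (𝟙 LX - lx ≫ s) ≫ lx = 0 := by
    rw [Preadditive.sub_comp, Category.id_comp, Category.assoc, ← hs, Category.comp_id,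
      sub_self]
  obtain ⟨ψ, hψ⟩ : ∃ ψ : LX ⟶ (Triangle.mk lx mx δ).invRotate.obj₁,
      𝟙 LX - lx ≫ s = ψ ≫ (Triangle.mk lx mx δ).invRotate.mor₁ :=
    Triangle.coyoneda_exact₂ _ (inv_rot_of_distTriang _ hT)
    (𝟙 LX - lx ≫ s) (by exact hz)
  have hψ0 : ψ = 0 :=
    zero₀ tD _ hLX (tD.ge_shift (n + 1) (-1) (n + 2) (by omega) _ hMX) (by omega)
  rw [hψ0, zero_comp] at hψ
  have hiso : lx ≫ s = 𝟙 LX := (sub_eq_zero.1 hψ).symm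
  exact (tD.le n).prop_of_iso (Iso.mk lx s hiso hs.symm) hLX

lemma ge_of_retract (tD : Triangulated.TStructure D) (n : ℤ) {X G : D} (hG : tD.ge n G)
    (i : X ⟶ G) (r : G ⟶ X) (hir : i ≫ r = 𝟙 X) : tD.ge n X := by
  obtain ⟨LX, MX, hLX, hMX, lx, mx, δ, hT⟩ := tD.exists_triangle X (n - 1) n (by omega)
  have hlx : lx = 0 := by
    have h1 : lx ≫ i = 0 := zero₀ tD _ hLX hG (by omega)
    calc lx = (lx ≫ i) ≫ r := by rw [Category.assoc, hir, Category.comp_id]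
    _ = 0 := by rw [h1, zero_comp]
  obtain ⟨r', hr'⟩ : ∃ r' : MX ⟶ X, 𝟙 X = mx ≫ r' := Triangle.yoneda_exact₂ _ hT (𝟙 X) (by exact (Category.comp_id _).trans hlx)
  -- hr' : 𝟙 X = mx ≫ r'
  have hz : mx ≫ (𝟙 MX - r' ≫ mx) = 0 := by
    rw [Preadditive.comp_sub, Category.comp_id, ← Category.assoc, ← hr', Category.id_comp,
      sub_self]
  obtain ⟨ψ, hψ⟩ : ∃ ψ : LX⟦(1 : ℤ)⟧ ⟶ MX, 𝟙 MX - r' ≫ mx = δ ≫ ψ :=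
    Triangle.yoneda_exact₃ _ hT (𝟙 MX - r' ≫ mx) hz
  have hψ0 : ψ = 0 :=
    zero₀ tD _ (tD.le_shift (n - 1) 1 (n - 2) (by omega) _ hLX) hMX (by omega)
  rw [hψ0, comp_zero] at hψ
  have hiso : r' ≫ mx = 𝟙 MX := (sub_eq_zero.1 hψ).symm
  exact (tD.ge n).prop_of_iso (Iso.mk mx r' hr'.symm hiso).symm hMX

end DSide

end TLiftAux

variable {C : Type u₁} [Category.{v} C] [Preadditive C] [HasZeroObject C] [HasShift C ℤ]
  [∀ n : ℤ, (shiftFunctor C n).Additive] [Pretriangulated C] [HasColimits C]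
variable {D : Type u₂} [Category.{v} D] [Preadditive D] [HasZeroObject D] [HasShift D ℤ]
  [∀ n : ℤ, (shiftFunctor D n).Additive] [Pretriangulated D] [HasColimits D]


open TLiftAux in
/-- The key construction: the truncation triangle for the lifted t-structure. -/
lemma exists_lifted_triangle
    (Φ : C ⥤ D) [Φ.CommShift ℤ] [Φ.IsTriangulated] (R : D ⥤ C)
    (adj : Φ ⊣ R) (tD : Triangulated.TStructure D)
    (hΦR : ∀ (n : ℤ) (X : D), tD.ge n X → tD.ge n (Φ.obj (R.obj X))) (A : C) :
    ∃ (X Y : C) (_ : tD.le 0 (Φ.obj X))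
      (_ : tD.ge 1 (Φ.obj Y) ∧ ∀ ⦃Z : C⦄ (f : Z ⟶ Y), tD.le 0 (Φ.obj Z) → f = 0)
      (f : X ⟶ A) (g : A ⟶ Y) (h : Y ⟶ X⟦(1 : ℤ)⟧),
      Triangle.mk f g h ∈ distTriang C := by
  have : R.IsRightAdjoint := adj.isRightAdjoint
  obtain ⟨L, W, hL, hW, l', p, δD, hTD⟩ := tD.exists_triangle_zero_one (Φ.obj A)
  set g : A ⟶ R.obj W := adj.homEquiv A W p with hg
  -- Step 1: the cokernel of `g` and its section
  set q : R.obj W ⟶ cokernel g := cokernel.π g with hq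
  obtain ⟨s, hs⟩ := sectionOfEpi q inferInstance
  set e₀ : R.obj W ⟶ R.obj W := q ≫ s with he₀def
  have he₀ : (𝟙 (R.obj W) - e₀) ≫ (𝟙 (R.obj W) - e₀) = 𝟙 (R.obj W) - e₀ := by
    have : e₀ ≫ e₀ = e₀ := by
      rw [he₀def, Category.assoc, ← Category.assoc s q, hs, Category.id_comp]
    simp only [Preadditive.sub_comp, Preadditive.comp_sub, Category.id_comp,
      Category.comp_id, this]
    abel
  obtain ⟨I, p', i', hip, hpi⟩ := splitIdempotent _ he₀
  have hge₀ : g ≫ e₀ = 0 := by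
    rw [he₀def, ← Category.assoc, hq, cokernel.condition, zero_comp]
  set g' : A ⟶ I := g ≫ p' with hg'def
  have hfact : g' ≫ i' = g := by
    rw [hg'def, Category.assoc, hpi, Preadditive.comp_sub, Category.comp_id, hge₀, sub_zero]
  haveI hp'epi : IsSplitEpi p' := ⟨⟨⟨i', hip⟩⟩⟩
  have hi'q : i' ≫ q = 0 := by
    have h1 : (p' ≫ i') ≫ q = 0 := by
      rw [hpi, Preadditive.sub_comp, Category.id_comp, he₀def, Category.assoc, hs,
        Category.comp_id, sub_self]
    rw [Category.assoc] at h1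
    exact (cancel_epi p').1 (by rw [h1, comp_zero])
  have hg'epi : Epi g' := by
    apply Preadditive.epi_of_cancel_zero
    intro T t ht
    have hgt : g ≫ p' ≫ t = 0 := by rw [← Category.assoc, ← hg'def, ht]
    have hdesc : q ≫ cokernel.desc g (p' ≫ t) hgt = p' ≫ t := cokernel.π_desc _ _ _
    calc t = (i' ≫ p') ≫ t := by rw [hip, Category.id_comp]
    _ = i' ≫ q ≫ cokernel.desc g (p' ≫ t) hgt := by rw [Category.assoc, hdesc]
    _ = 0 := by rw [← Category.assoc, hi'q, zero_comp]
  obtain ⟨σ, hσ⟩ := sectionOfEpi g' hg'epi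
  set eA : A ⟶ A := g' ≫ σ with heAdef
  have heA : (𝟙 A - eA) ≫ (𝟙 A - eA) = 𝟙 A - eA := by
    have : eA ≫ eA = eA := by
      rw [heAdef, Category.assoc, ← Category.assoc σ g', hσ, Category.id_comp]
    simp only [Preadditive.sub_comp, Preadditive.comp_sub, Category.id_comp,
      Category.comp_id, this]
    abel
  obtain ⟨K, pK, iK, hiKpK, hpKiK⟩ := splitIdempotent _ heA
  have hiKeA : iK ≫ eA = 0 := by
    have h1 : iK ≫ (𝟙 A - eA) = iK := by
      rw [← hpKiK, ← Category.assoc, hiKpK, Category.id_comp]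
    rw [Preadditive.comp_sub, Category.comp_id] at h1
    have := sub_eq_self.1 h1
    exact this
  have hiKg' : iK ≫ g' = 0 := by
    calc iK ≫ g' = iK ≫ g' ≫ σ ≫ g' := by rw [hσ, Category.comp_id]
    _ = (iK ≫ eA) ≫ g' := by rw [heAdef]; simp only [Category.assoc]
    _ = 0 := by rw [hiKeA, zero_comp]
  -- Step 2: the distinguished triangle on `iK`
  obtain ⟨E, c, d, hTE⟩ := Pretriangulated.distinguished_cocone_triangle iK
  have hiKc : iK ≫ c = 0 := comp_distTriang_mor_zero₁₂ _ hTE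
  have hd : d = 0 := by
    have h31 := comp_distTriang_mor_zero₃₁ _ hTE
    change d ≫ (shiftFunctor C (1 : ℤ)).map iK = 0 at h31
    haveI : IsSplitMono ((shiftFunctor C (1 : ℤ)).map iK) :=
      ⟨⟨⟨(shiftFunctor C (1 : ℤ)).map pK, by
        rw [← Functor.map_comp, hiKpK, CategoryTheory.Functor.map_id]⟩⟩⟩
    exact (cancel_mono ((shiftFunctor C (1 : ℤ)).map iK)).1 (by rw [h31, zero_comp])
  obtain ⟨w, hw⟩ : ∃ w : E ⟶ I, g' = c ≫ w := Triangle.yoneda_exact₂ _ hTE g' hiKg'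
  -- hw : g' = c ≫ w
  set v : I ⟶ E := σ ≫ c with hvdef
  have hvw : v ≫ w = 𝟙 I := by rw [hvdef, Category.assoc, ← hw, hσ]
  have heAc : eA ≫ c = c := by
    have h3 : (𝟙 A - eA) ≫ c = 0 := by
      rw [← hpKiK, Category.assoc, hiKc, comp_zero]
    rw [Preadditive.sub_comp, Category.id_comp] at h3
    exact (sub_eq_zero.1 h3).symm
  have hwv : w ≫ v = 𝟙 E := by
    have hc0 : c ≫ (𝟙 E - w ≫ v) = 0 := by
      have h1 : c ≫ w ≫ v = eA ≫ c := by
        rw [← Category.assoc c w v, ← hw, heAdef, hvdef, ← Category.assoc g' σ c]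
      rw [Preadditive.comp_sub, Category.comp_id, h1, heAc, sub_self]
    obtain ⟨ψ, hψ⟩ : ∃ ψ : K⟦(1 : ℤ)⟧ ⟶ E, 𝟙 E - w ≫ v = d ≫ ψ :=
      Triangle.yoneda_exact₃ _ hTE (𝟙 E - w ≫ v) hc0
    rw [hd, zero_comp] at hψ
    exact (sub_eq_zero.1 hψ).symm
  -- Step 3: the triangle `K ⟶ A ⟶ I ⟶ K⟦1⟧`
  have hgvc : g' ≫ v = c := by
    rw [hvdef, ← Category.assoc g' σ c, ← heAdef, heAc]
  have hT' : Triangle.mk iK g' (0 : I ⟶ K⟦(1 : ℤ)⟧) ∈ distTriang C := by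
    refine isomorphic_distinguished _ hTE _ ?_
    refine Triangle.isoMk _ _ (Iso.refl K) (Iso.refl A)
      (Iso.mk v w hvw hwv) ?_ ?_ ?_
    · exact (Category.comp_id iK).trans (Category.id_comp iK).symm
    · have h5 : g' ≫ v = 𝟙 A ≫ c := by rw [hgvc, Category.id_comp]
      exact h5
    · change (0 : I ⟶ K⟦(1 : ℤ)⟧) ≫ (shiftFunctor C (1 : ℤ)).map (𝟙 K) = v ≫ d
      rw [hd, comp_zero, zero_comp]
  -- Step 4: `Φ.obj K` is `≤ 0`
  have hpfact : Φ.map g ≫ adj.counit.app W = p := by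
    have h1 := adj.homEquiv_counit (X := A) (Y := W) (g := g)
    rw [hg, Equiv.symm_apply_apply] at h1
    exact h1.symm
  have hiKgzero : iK ≫ g = 0 := by
    rw [← hfact, ← Category.assoc, hiKg', zero_comp]
  have hΦiKp : Φ.map iK ≫ p = 0 := by
    rw [← hpfact, ← Category.assoc, ← Φ.map_comp, hiKgzero, Functor.map_zero, zero_comp]
  obtain ⟨c₁, hc₁⟩ : ∃ c₁ : Φ.obj K ⟶ L, Φ.map iK = c₁ ≫ l' :=
    Triangle.coyoneda_exact₂ _ hTD (Φ.map iK) (by exact hΦiKp)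
  have hKLE : tD.le 0 (Φ.obj K) := by
    refine le_of_retract tD 0 hL c₁ (l' ≫ Φ.map pK) ?_
    rw [← Category.assoc, ← hc₁, ← Φ.map_comp, hiKpK, Φ.map_id]
  -- Step 5: `Φ.obj I` is `≥ 1` and `I` is right orthogonal to `C^{≤0}`
  have hIGE : tD.ge 1 (Φ.obj I) :=
    ge_of_retract tD 1 (hΦR 1 W hW) (Φ.map i') (Φ.map p')
      (by rw [← Φ.map_comp, hip, Φ.map_id])
  have horth : ∀ ⦃Z : C⦄ (f : Z ⟶ I), tD.le 0 (Φ.obj Z) → f = 0 := by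
    intro Z f hZ
    have h1 : (adj.homEquiv Z W).symm (f ≫ i') = 0 := tD.zero' _ hZ hW
    have h2 : f ≫ i' = 0 := by
      have h3 := (adj.homEquiv Z W).apply_symm_apply (f ≫ i')
      rw [h1, adj.homEquiv_unit, Functor.map_zero, comp_zero] at h3
      exact h3.symm
    calc f = f ≫ i' ≫ p' := by rw [hip, Category.comp_id]
    _ = 0 := by rw [← Category.assoc, h2, zero_comp]
  exact ⟨K, I, hKLE, ⟨hIGE, horth⟩, iK, g', 0, hT'⟩

theorem tStructure_lifted_along_left_adjoint
    (Φ : C ⥤ D) [Φ.CommShift ℤ] [Φ.IsTriangulated] (R : D ⥤ C)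
    (adj : Φ ⊣ R) (tD : Triangulated.TStructure D)
    -- presentability of `D^{≤0}` (stand-in: closure under small colimits)
    (hpres : ∀ (J : Type v) [SmallCategory J] (F : J ⥤ D),
      (∀ j, tD.le 0 (F.obj j)) → tD.le 0 (colimit F))
    -- `Φ ∘ R` is left t-exact
    (hΦR : ∀ (n : ℤ) (X : D), tD.ge n X → tD.ge n (Φ.obj (R.obj X))) :
    ∃ tC : Triangulated.TStructure C,
      -- `C^{≤0}` is the preimage of `D^{≤0}` (in every degree)
      (∀ (n : ℤ) (X : C), tC.le n X ↔ tD.le n (Φ.obj X)) ∧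
      -- and `Φ` is t-exact for this t-structure
      (∀ (n : ℤ) (X : C), tC.le n X → tD.le n (Φ.obj X)) ∧
      (∀ (n : ℤ) (X : C), tC.ge n X → tD.ge n (Φ.obj X)) := by
  refine ⟨{
    le := fun n X => tD.le n (Φ.obj X)
    ge := fun n X => tD.ge n (Φ.obj X) ∧ ∀ ⦃Z : C⦄ (f : Z ⟶ X), tD.le (n - 1) (Φ.obj Z) → f = 0
    le_isClosedUnderIsomorphisms := fun n =>
      ⟨fun e hX => (tD.le n).prop_of_iso (Φ.mapIso e) hX⟩
    ge_isClosedUnderIsomorphisms := fun n =>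
      ⟨fun e hX => ⟨(tD.ge n).prop_of_iso (Φ.mapIso e) hX.1, fun Z f hZ => by
        have h0 : f ≫ e.inv = 0 := hX.2 (f ≫ e.inv) hZ
        calc f = (f ≫ e.inv) ≫ e.hom := by rw [Category.assoc, e.inv_hom_id, Category.comp_id]
        _ = 0 := by rw [h0, zero_comp]⟩⟩
    le_shift := fun n a n' h X hX =>
      (tD.le n').prop_of_iso ((Φ.commShiftIso a).app X).symm (tD.le_shift n a n' h _ hX)
    ge_shift := fun n a n' h X hX =>
      ⟨(tD.ge n').prop_of_iso ((Φ.commShiftIso a).app X).symm (tD.ge_shift n a n' h _ hX.1),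
       fun Z f hZ => by
        have hZ' : tD.le (n - 1) (Φ.obj (Z⟦(-a : ℤ)⟧)) :=
          (tD.le (n - 1)).prop_of_iso ((Φ.commShiftIso (-a)).app Z).symm
            (tD.le_shift (n' - 1) (-a) (n - 1) (by omega) _ hZ)
        have h0 : ((shiftFunctor C (-a)).map f ≫
            (shiftFunctorCompIsoId C a (-a) (by omega)).hom.app X) = 0 := hX.2 _ hZ'
        rw [CategoryTheory.Preadditive.IsIso.comp_right_eq_zero] at h0
        exact (shiftFunctor C (-a)).map_eq_zero_iff.1 h0⟩
    zero' := fun X Y f hX hY => hY.2 f (by simpa using hX)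
    le_zero_le := fun X hX => tD.le_zero_le _ hX
    ge_one_le := fun X hX =>
      ⟨tD.ge_one_le _ hX.1, fun Z f hZ =>
        hX.2 f (tD.le_monotone (by omega : (0:ℤ) - 1 ≤ 1 - 1) _ hZ)⟩
    exists_triangle_zero_one := fun A => by
      obtain ⟨X, Y, hX, hY, f, g, h, hT⟩ := exists_lifted_triangle Φ R adj tD hΦR A
      exact ⟨X, Y, hX, ⟨hY.1, fun Z f hZ => hY.2 f (by simpa using hZ)⟩, f, g, h, hT⟩ },
    fun n X => Iff.rfl, fun n X h => h, fun n X h => h.1⟩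
end

section
/- In the setting of the previous statement (C ≅ colim Cα a filtered colimit of stable ∞-categories with compatible t-structures), if every transition functor F_{αβ} restricted to hearts sends simple objects to simple objects, then every Fα : Cα^♡ → C^♡ sends simple objects to simple objects. If moreover every F_{αβ} is conservative, then every simple object of C^♡ is isomorphic to Fα(Xα) for some α and some simple Xα ∈ Cα^♡. -/
/-!
STATEMENT 10: Let `C ≅ colim Cα` be a filtered colimit of abelian categories (the
hearts of compatible t-structures) along exact transition functors `T`, with exact
structure functors `F`.  If every transition functor sends simple objects to simple
objects, then so does every structure functor `Fα : Cα ⥤ C`; if moreover every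
transition functor is conservative, then every simple object of `C` is isomorphic
to `Fα(Xα)` for some stage `α` and simple `Xα`.
-/

open CategoryTheory CategoryTheory.Limits

universe v v₂ u u₂

variable {ι : Type} [Preorder ι] [IsDirected ι (· ≤ ·)] [Nonempty ι]

variable {C : Type u} [Category.{v} C] [Abelian C]

variable (Cat : ι → Type u₂) [∀ i, Category.{v₂} (Cat i)] [∀ i, Abelian (Cat i)]

theorem simples_in_filtered_colimit_of_hearts
    (T : ∀ i j, i ≤ j → (Cat i ⥤ Cat j))
    (F : ∀ i, Cat i ⥤ C)
    (e : ∀ i j (h : i ≤ j), T i j h ⋙ F j ≅ F i)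
    -- exactness of the transition and structure functors (induced by t-exactness)
    [∀ i j (h : i ≤ j), PreservesFiniteLimits (T i j h)]
    [∀ i j (h : i ≤ j), PreservesFiniteColimits (T i j h)]
    [∀ i, PreservesFiniteLimits (F i)] [∀ i, PreservesFiniteColimits (F i)]
    -- colimit presentation: joint essential surjectivity
    (hsurj : ∀ X : C, ∃ (i : ι) (Y : Cat i), Nonempty ((F i).obj Y ≅ X))
    -- every morphism of `C` between objects from a stage comes from a later stage
    (hhom : ∀ (i : ι) (X Y : Cat i) (f : (F i).obj X ⟶ (F i).obj Y),
      ∃ (j : ι) (h : i ≤ j) (g : (T i j h).obj X ⟶ (T i j h).obj Y),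
        (e i j h).hom.app X ≫ f = (F j).map g ≫ (e i j h).hom.app Y)
    -- morphisms identified in the colimit are identified at some stage
    (hinj : ∀ (i : ι) (X Y : Cat i) (g g' : X ⟶ Y), (F i).map g = (F i).map g' →
      ∃ (j : ι) (h : i ≤ j), (T i j h).map g = (T i j h).map g')
    -- transitions preserve simple objects
    (hsimp : ∀ i j (h : i ≤ j) (X : Cat i), Simple X → Simple ((T i j h).obj X)) :
    -- (1) the structure functors preserve simple objects
    (∀ (i : ι) (X : Cat i), Simple X → Simple ((F i).obj X)) ∧
    -- (2) if the transitions are conservative, every simple of `C` comes from a stage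
    ((∀ i j (h : i ≤ j), (T i j h).ReflectsIsomorphisms) →
      ∀ X : C, Simple X → ∃ (i : ι) (Y : Cat i), Simple Y ∧
        Nonempty ((F i).obj Y ≅ X)) := by
    -- `F i` applied to a simple object has nonzero identity
  have hFne : ∀ (i : ι) (X : Cat i), Simple X → (𝟙 ((F i).obj X) : _) ≠ 0 := by
    intro i X hX h
    obtain ⟨j, hij, hj⟩ := hinj i X X (𝟙 X) 0
      (by rw [(F i).map_id, (F i).map_zero, h])
    rw [(T i j hij).map_id, (T i j hij).map_zero] at hj
    haveI := hsimp i j hij X hX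
    exact id_nonzero ((T i j hij).obj X) hj
  constructor
  · intro i X hX
    constructor
    intro Z f hf
    constructor
    · intro hiso h0
      apply hFne i X hX
      haveI := hiso
      rw [← cancel_epi f, Category.comp_id, comp_zero, h0]
    · intro hne
      obtain ⟨i', W, ⟨φ⟩⟩ := hsurj Z
      obtain ⟨k, hik, hi'k⟩ := directed_of (· ≤ ·) i i'
      set X' := (T i k hik).obj X with hX'
      set W' := (T i' k hi'k).obj W with hW'
      let αX : (F k).obj X' ≅ (F i).obj X := (e i k hik).app X
      let αW : (F k).obj W' ≅ (F i').obj W := (e i' k hi'k).app W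
      let f' : (F k).obj W' ⟶ (F k).obj X' := αW.hom ≫ φ.hom ≫ f ≫ αX.inv
      have hf2 : f = φ.inv ≫ αW.inv ≫ f' ≫ αX.hom := by simp [f']
      haveI : Mono f' := by dsimp only [f']; infer_instance
      obtain ⟨l, hkl, g, hg⟩ := hhom k W' X' f'
      haveI hXs : Simple ((T k l hkl).obj X') := hsimp k l hkl X' (hsimp i k hik X hX)
      have hFg : (F l).map g
          = (e k l hkl).hom.app W' ≫ f' ≫ inv ((e k l hkl).hom.app X') := by
        rw [← Category.assoc, hg]; simp
      have hg0 : g ≠ 0 := by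
        intro h
        apply hne
        have h1 : (e k l hkl).hom.app W' ≫ f' = 0 := by
          rw [hg, h, (F l).map_zero, zero_comp]
        have hf'0 : f' = 0 := by
          rw [← cancel_epi ((e k l hkl).hom.app W'), comp_zero]
          exact h1
        rw [hf2, hf'0, zero_comp, comp_zero, comp_zero]
      haveI : Epi g := epi_of_nonzero_to_simple hg0
      haveI : Epi ((F l).map g) := (F l).map_epi g
      haveI : Mono ((F l).map g) := by rw [hFg]; infer_instance
      haveI : IsIso ((F l).map g) := isIso_of_mono_of_epi _
      have hf'iso : IsIso f' := by
        have : f' = inv ((e k l hkl).hom.app W') ≫ (F l).map g ≫ (e k l hkl).hom.app X' := by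
          rw [hFg]; simp
        rw [this]; infer_instance
      rw [hf2]; infer_instance
  · intro hcons X hX
    obtain ⟨i, Y, ⟨φ⟩⟩ := hsurj X
    refine ⟨i, Y, ?_, ⟨φ⟩⟩
    haveI : Simple ((F i).obj Y) := Simple.of_iso φ
    constructor
    intro Z u hu
    constructor
    · intro hiso h0
      apply id_nonzero ((F i).obj Y)
      haveI := hiso
      have : 𝟙 Y = 0 := by rw [← cancel_epi u, Category.comp_id, comp_zero, h0]
      rw [← (F i).map_id, this, (F i).map_zero]
    · intro hne
      haveI : Mono ((F i).map u) := (F i).map_mono u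
      by_cases h0 : (F i).map u = 0
      · exfalso
        have hid : 𝟙 ((F i).obj Z) = 0 := by
          rw [← cancel_mono ((F i).map u), h0, Category.id_comp, zero_comp]
        obtain ⟨j, hij, hj⟩ := hinj i Z Z (𝟙 Z) 0
          (by rw [(F i).map_id, (F i).map_zero, hid])
        rw [(T i j hij).map_id, (T i j hij).map_zero] at hj
        haveI := hcons i j hij
        have hzi : IsIso ((T i j hij).map (0 : Z ⟶ Z)) := by
          rw [(T i j hij).map_zero, ← hj]; infer_instance
        haveI : IsIso (0 : Z ⟶ Z) := isIso_of_reflects_iso _ (T i j hij)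
        have hZ : 𝟙 Z = 0 := by rw [← IsIso.inv_hom_id (0 : Z ⟶ Z), comp_zero]
        exact hne (by rw [← Category.id_comp u, hZ, zero_comp])
      · haveI : IsIso ((F i).map u) := isIso_of_mono_of_nonzero h0
        obtain ⟨j, hij, g, hg⟩ := hhom i Y Z (inv ((F i).map u))
        have hnat : (F j).map ((T i j hij).map u) ≫ (e i j hij).hom.app Y
            = (e i j hij).hom.app Z ≫ (F i).map u := (e i j hij).hom.naturality u
        have key : (F j).map (g ≫ (T i j hij).map u)
            = (F j).map (𝟙 ((T i j hij).obj Y)) := by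
          rw [(F j).map_comp, (F j).map_id, ← cancel_mono ((e i j hij).hom.app Y),
            Category.assoc, hnat, ← Category.assoc, ← hg]
          simp
        obtain ⟨k, hjk, hk⟩ := hinj j _ _ _ _ key
        rw [(T j k hjk).map_comp, (T j k hjk).map_id] at hk
        haveI : Mono ((T i j hij).map u) := (T i j hij).map_mono u
        haveI : Mono ((T j k hjk).map ((T i j hij).map u)) := (T j k hjk).map_mono _
        haveI : IsSplitEpi ((T j k hjk).map ((T i j hij).map u)) :=
          IsSplitEpi.mk ⟨(T j k hjk).map g, hk⟩
        haveI : IsIso ((T j k hjk).map ((T i j hij).map u)) := isIso_of_mono_of_epi _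
        haveI := hcons j k hjk; haveI := hcons i j hij
        haveI : IsIso ((T i j hij).map u) := isIso_of_reflects_iso _ (T j k hjk)
        exact isIso_of_reflects_iso u (T i j hij)
end

section
/- Let R be the graded ring C[x₀, x₁, x₂, ...] (polynomial functions on O = C[[t]], with xᵢ dual to tⁱ, graded so each xᵢ has weight 1 for the scaling action), and consider the graded R-module M with underlying space R ⊗ Λ(ξ), where ξ has cohomological degree −1 (the Koszul algebra Sym(O^∨) ⊗ Λ((t^{-1}O/O)^∨[1])), with module structure via the quotient map killing the ideal of the inclusion Z_{-1,1} ⊆ R̂₀. Then M fits into a short exact sequence of graded dg-modules 0 → R[1]⟨−1⟩ → M → R → 0 which does not split; symmetrically, the module corresponding to the codimension-1 ideal (x₀) gives a nonsplit short exact sequence 0 → R → R/x₀-twisted-module → R[1]⟨−1⟩ → 0 after rotation. Consequently the two extensions represent distinct objects in the heart of the Koszul t-structure. -/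
/-!
STATEMENT 16 (the abelian `GL₁` example of Section 1.6): Let
`R = ℂ[x₀, x₁, x₂, …]` be polynomial functions on `𝒪 = ℂ[[t]]`.  The coordinate
ring of `Z_{-1,1}` is `M = R ⊗ Λ(ξ)` with one odd generator `ξ`, viewed as a
module over `ℂ[R̂₀]` via the quotient map; it fits in a short exact sequence
`0 → R[1]⟨−1⟩ → M → R → 0` which does not split.  Symmetrically, the
codimension-one ideal `(x₀)` (the coordinate ring of `Z_{1,-1} = t𝒪`) gives a
nonsplit short exact sequence `0 → R⟨−1⟩ → R → R/(x₀) → 0`.  Consequently the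
two extensions represent distinct objects (in particular `M` differs from the
split extension).

Concrete algebraic model (suppressing the cohomological/weight grading):
`A := R[ξ]/(ξ²) = DualNumber R` is the subring of `ℂ[R̂₀]` through which the
action on `M` factors, `M = A` as an `A`-module, and the submodule `R·ξ = (ε)`
and quotient `R` give the first sequence; the second sequence is the Koszul
resolution `0 → R → R → R/(x₀) → 0` over `R`.
-/

open MvPolynomial

set_option synthInstance.maxHeartbeats 2000000
set_option maxHeartbeats 4000000

noncomputable section

abbrev RR : Type := MvPolynomial ℕ ℂ

abbrev AA : Type := DualNumber RR

/-- The odd generator `ξ`. -/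
def xi : AA := DualNumber.eps

/-- The submodule `R·ξ ⊆ M`, i.e. the ideal `(ε) ⊆ A`: the image of `R[1]⟨−1⟩`. -/
def Ixi : Ideal AA := Ideal.span {xi}

/-- The ideal `(x₀) ⊆ R` cutting out `Z_{1,-1} = t𝒪 ⊆ 𝒪`. -/
def Jx : Ideal RR := Ideal.span {X 0}

lemma xi_ne_zero : xi ≠ 0 := by
  intro h
  have := congrArg TrivSqZeroExt.snd h
  simp only [xi, DualNumber.eps, TrivSqZeroExt.snd_inr, TrivSqZeroExt.snd_zero] at this
  exact one_ne_zero this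

lemma xi_mul_xi : xi * xi = 0 := DualNumber.eps_mul_eps

lemma xi_mul_mem (a : AA) : xi * a ∈ Ixi :=
  Ideal.mem_span_singleton.2 ⟨a, rfl⟩

lemma xi_smul_quot (q : AA ⧸ Ixi) : xi • q = 0 := by
  obtain ⟨a, rfl⟩ := Submodule.mkQ_surjective Ixi q
  show Submodule.mkQ Ixi (xi * a) = 0
  exact (Submodule.Quotient.mk_eq_zero _).2 (xi_mul_mem a)

lemma xi_smul_sub (i : (Ixi : Submodule AA AA)) : xi • i = 0 := by
  obtain ⟨v, hv⟩ := i
  obtain ⟨c, rfl⟩ := Ideal.mem_span_singleton.1 hv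
  apply Subtype.ext
  show xi * (xi * c) = 0
  rw [← mul_assoc, xi_mul_xi, zero_mul]

theorem gl1_example_nonsplit_extensions :
    -- (1) `0 → R·ξ → M → R → 0` is a short exact sequence of `A`-modules
    (Function.Injective (Submodule.subtype (Ixi : Submodule AA AA))) ∧
    (Function.Exact (Submodule.subtype (Ixi : Submodule AA AA))
      (Submodule.mkQ (Ixi : Submodule AA AA))) ∧
    (Function.Surjective (Submodule.mkQ (Ixi : Submodule AA AA))) ∧
    -- ... which does not split
    (¬ ∃ s : (AA ⧸ Ixi) →ₗ[AA] AA,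
      (Submodule.mkQ (Ixi : Submodule AA AA)).comp s = LinearMap.id) ∧
    -- (2) the Koszul sequence `0 → R → R → R/(x₀) → 0` for the ideal `(x₀)`
    (Function.Injective ((LinearMap.lsmul RR RR) (X 0))) ∧
    (Function.Exact ((LinearMap.lsmul RR RR) (X 0))
      (Submodule.mkQ (Jx : Submodule RR RR))) ∧
    (Function.Surjective (Submodule.mkQ (Jx : Submodule RR RR))) ∧
    -- ... which does not split either
    (¬ ∃ s : (RR ⧸ Jx) →ₗ[RR] RR,
      (Submodule.mkQ (Jx : Submodule RR RR)).comp s = LinearMap.id) ∧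
    -- (3) consequently `M` is a nonsplit extension, distinct from the split object
    (¬ Nonempty (AA ≃ₗ[AA] ((AA ⧸ Ixi) × (Ixi : Submodule AA AA)))) := by
  refine ⟨?_, ?_, ?_, ?_, ?_, ?_, ?_, ?_, ?_⟩
  · exact Submodule.injective_subtype _
  · exact LinearMap.exact_subtype_mkQ _
  · exact Submodule.mkQ_surjective _
  · rintro ⟨s, hs⟩
    have h1 : Submodule.mkQ Ixi (s 1) = 1 := congrFun (congrArg DFunLike.coe hs) 1
    have h2 : xi • s 1 = s (xi • (1 : AA ⧸ Ixi)) := (map_smul s xi 1).symm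
    rw [xi_smul_quot, map_zero] at h2
    have h3 : s 1 - 1 ∈ Ixi := by
      rw [← Submodule.Quotient.mk_eq_zero, Submodule.Quotient.mk_sub]
      show Submodule.mkQ Ixi (s 1) - Submodule.mkQ Ixi 1 = 0
      rw [h1]; simp
    obtain ⟨c, hc⟩ := Ideal.mem_span_singleton.1 h3
    have : s 1 = 1 + xi * c := by linear_combination hc
    rw [this] at h2
    have : xi = 0 := by
      have := h2
      rw [smul_eq_mul, mul_add, mul_one, ← mul_assoc, xi_mul_xi, zero_mul,
        add_zero] at this
      exact this
    exact xi_ne_zero this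
  · intro a b h
    have h' : (X 0 : RR) * a = (X 0) * b := h
    exact mul_left_cancel₀ (X_ne_zero 0) h'
  · rw [LinearMap.exact_iff, Submodule.ker_mkQ]
    ext y
    rw [Jx, Ideal.mem_span_singleton, LinearMap.mem_range]
    constructor
    · rintro ⟨c, rfl⟩; exact ⟨c, rfl⟩
    · rintro ⟨c, rfl⟩; exact ⟨c, rfl⟩
  · exact Submodule.mkQ_surjective _
  · rintro ⟨s, hs⟩
    have h1 : Submodule.mkQ Jx (s 1) = 1 := congrFun (congrArg DFunLike.coe hs) 1
    have h3 : s 1 - 1 ∈ Jx := by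
      rw [← Submodule.Quotient.mk_eq_zero, Submodule.Quotient.mk_sub]
      show Submodule.mkQ Jx (s 1) - Submodule.mkQ Jx 1 = 0
      rw [h1]; simp
    obtain ⟨c, hc⟩ := Ideal.mem_span_singleton.1 h3
    have hX : (X 0 : RR) • (1 : RR ⧸ Jx) = 0 := by
      show Submodule.mkQ Jx (X 0 * 1) = 0
      rw [mul_one]
      exact (Submodule.Quotient.mk_eq_zero _).2
        (Ideal.mem_span_singleton.2 dvd_rfl)
    have h2 : (X 0 : RR) • s 1 = 0 := by
      rw [← map_smul, hX, map_zero]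
    have hs1 : s 1 = 1 + X 0 * c := by linear_combination hc
    rw [hs1, smul_eq_mul, mul_add, mul_one] at h2
    have h4 : (X 0 : RR) * (1 + X 0 * c) = X 0 * 0 := by ring_nf; linear_combination h2
    have h5 : (1 : RR) + X 0 * c = 0 := mul_left_cancel₀ (X_ne_zero 0) h4
    have := congrArg constantCoeff h5
    simp at this
  · rintro ⟨e⟩
    have h0 : e xi = 0 := by
      have h : e xi = xi • e 1 := by rw [← map_smul, smul_eq_mul, mul_one]
      rw [h]
      have hp : xi • e 1 = (xi • (e 1).1, xi • (e 1).2) := rfl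
      rw [hp, xi_smul_quot, xi_smul_sub]
      rfl
    exact xi_ne_zero (e.injective (by rw [h0, map_zero]))


end
end
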